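/- (Lyapunov derivative identity for GeoD rotation estimation) Let V be a finite set with symmetric adjacency relation Adj, and let R̃ : V × V → SO(3) be pairwise consistent relative rotation measurements, i.e. R̃(j,i) = R̃(i,j)ᵀ for all adjacent i, j. Let R_i : ℝ → ℝ^{3×3} (i ∈ V) be curves with R_i(t) ∈ SO(3) and θ(R_i(t)ᵀ R_j(t) R̃(i,j)ᵀ) ∈ (0, π/2) for all adjacent i, j and all t, and suppose each R_i satisfies the GeoD rotation dynamics: at every t, R_i has derivative R_i(t) · ( Σ_{j: Adj(i,j)} Log(R_i(t)ᵀ R_j(t) R̃(i,j)ᵀ) ). Define ω_i(t) := Σ_{j: Adj(i,j)} (Log(R_i(t)ᵀ R_j(t) R̃(i,j)ᵀ))^∨ and V(t) := Σ_{i∈V} Σ_{j: Adj(i,j)} (1/2)‖(Log(R_i(t)ᵀ R_j(t) R̃(i,j)ᵀ))^∨‖₂². Then at every t, the function V is differentiable with derivative −2 Σ_{i∈V} ‖ω_i(t)‖₂². -/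

import Mathlib

open Matrix Real RealInnerProductSpace

/-- The vee map, inverse of the hat map on skew-symmetric matrices. -/
def vee (S : Matrix (Fin 3) (Fin 3) ℝ) : EuclideanSpace ℝ (Fin 3) :=
  WithLp.toLp 2 ![S 2 1, S 0 2, S 1 0]

/-- `SO(3)`: real 3×3 matrices `R` with `RᵀR = I` and `det R = 1`. -/
def SO3 (R : Matrix (Fin 3) (Fin 3) ℝ) : Prop :=
  Rᵀ * R = 1 ∧ R.det = 1

/-- The rotation angle `θ(R) = arccos((tr(R) − 1)/2)`. -/
noncomputable def rotAngle (R : Matrix (Fin 3) (Fin 3) ℝ) : ℝ :=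
  Real.arccos ((Matrix.trace R - 1) / 2)

/-- The matrix logarithm `Log(R) = (θ/(2 sin θ))(R − Rᵀ)` for `θ ≠ 0`, and `0` for `θ = 0`. -/
noncomputable def matLog (R : Matrix (Fin 3) (Fin 3) ℝ) : Matrix (Fin 3) (Fin 3) ℝ :=
  if rotAngle R = 0 then 0
  else (rotAngle R / (2 * Real.sin (rotAngle R))) • (R - Rᵀ)

/-! Write `Eᵢⱼ = Rᵢᵀ Rⱼ R̃ᵢⱼᵀ ∈ SO(3)` and `θᵢⱼ = θ(Eᵢⱼ) ∈ (0, π)`. Then `‖Log(Eᵢⱼ)^∨‖ = θᵢⱼ`, so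
`V = Σ θᵢⱼ² / 2`, and differentiating `θ = arccos ((tr E - 1) / 2)` gives
`d(θ² / 2) = -(θ / (2 sin θ)) tr Ė`. Since `tr (Log(E) S) = (θ / sin θ) tr (E S)` for skew `S`,
and the dynamics `Ṙᵢ = Rᵢ Aᵢ` with `Aᵢ = Σⱼ Log(Eᵢⱼ)` give `tr Ėᵢⱼ = -tr (Eᵢⱼ Aᵢ) - tr (Eⱼᵢ Aⱼ)`
(here `Eⱼᵢ = Rⱼᵀ Rᵢ R̃ᵢⱼ` by consistency `R̃ⱼᵢ = R̃ᵢⱼᵀ`; it has the trace, hence the angle, of `Eᵢⱼ`),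
`d(θᵢⱼ² / 2) = (tr (Log(Eᵢⱼ) Aᵢ) + tr (Log(Eⱼᵢ) Aⱼ)) / 2`. Summed over the symmetric edge set
both halves contribute `Σᵢ tr (Aᵢ²) / 2`, and `tr (A²) = -2 ‖A^∨‖²` for skew `A`. -/

section EntrywiseDeriv

variable {l m n : Type*} {t : ℝ}

def HasEntrywiseDerivAt (f : ℝ → Matrix m n ℝ) (f' : Matrix m n ℝ) (t : ℝ) : Prop :=
  ∀ i j, HasDerivAt (fun s => f s i j) (f' i j) t

theorem HasEntrywiseDerivAt.transpose {f : ℝ → Matrix m n ℝ} {f' : Matrix m n ℝ}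
    (hf : HasEntrywiseDerivAt f f' t) : HasEntrywiseDerivAt (fun s => (f s)ᵀ) f'ᵀ t :=
  fun i j => hf j i

theorem HasEntrywiseDerivAt.mul [Fintype m] {f : ℝ → Matrix l m ℝ} {g : ℝ → Matrix m n ℝ}
    {f' : Matrix l m ℝ} {g' : Matrix m n ℝ}
    (hf : HasEntrywiseDerivAt f f' t) (hg : HasEntrywiseDerivAt g g' t) :
    HasEntrywiseDerivAt (fun s => f s * g s) (f' * g t + f t * g') t := by
  intro i k
  simp only [Matrix.add_apply, mul_apply, ← Finset.sum_add_distrib]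
  exact HasDerivAt.fun_sum fun j _ => (hf i j).fun_mul (hg j k)

theorem HasEntrywiseDerivAt.mul_const [Fintype m] {f : ℝ → Matrix l m ℝ} {f' : Matrix l m ℝ}
    (hf : HasEntrywiseDerivAt f f' t) (C : Matrix m n ℝ) :
    HasEntrywiseDerivAt (fun s => f s * C) (f' * C) t := by
  intro i k
  simp only [mul_apply]
  exact HasDerivAt.fun_sum fun j _ => (hf i j).mul_const (C j k)

theorem HasEntrywiseDerivAt.hasDerivAt_trace [Fintype n] {f : ℝ → Matrix n n ℝ} {f' : Matrix n n ℝ}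
    (hf : HasEntrywiseDerivAt f f' t) : HasDerivAt (fun s => trace (f s)) (trace f') t :=
  HasDerivAt.fun_sum fun i _ => hf i i

end EntrywiseDeriv

theorem vee_add (S T : Matrix (Fin 3) (Fin 3) ℝ) : vee (S + T) = vee S + vee T := by
  ext k; fin_cases k <;> simp [vee]

theorem vee_sum {ι : Type*} (s : Finset ι) (F : ι → Matrix (Fin 3) (Fin 3) ℝ) :
    vee (∑ j ∈ s, F j) = ∑ j ∈ s, vee (F j) :=
  map_sum (AddMonoidHom.mk' vee vee_add) F s

theorem norm_vee_sq_of_transpose_eq_neg {X : Matrix (Fin 3) (Fin 3) ℝ} (hX : Xᵀ = -X) :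
    ‖vee X‖ ^ 2 = -trace (X * X) / 2 := by
  have h a b : X b a = -X a b := by simpa using congrFun (congrFun hX a) b
  have hdiag a : X a a = 0 := by linarith [h a a]
  rw [EuclideanSpace.norm_eq, Real.sq_sqrt (by positivity)]
  simp only [vee, trace_fin_three, mul_apply, Fin.sum_univ_three, WithLp.ofLp_toLp,
    Matrix.cons_val_zero, Matrix.cons_val_one, Matrix.cons_val_two, Matrix.head_cons,
    Matrix.tail_cons, Real.norm_eq_abs, sq_abs, hdiag, h 1 2, h 2 0, h 0 1]
  ring

theorem trace_transpose_mul_of_transpose_eq_neg {n : Type*} [Fintype n]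
    (M : Matrix n n ℝ) {S : Matrix n n ℝ} (hS : Sᵀ = -S) : trace (Mᵀ * S) = -trace (M * S) := by
  rw [← trace_transpose, transpose_mul, transpose_transpose, trace_mul_comm, hS, Matrix.mul_neg,
    trace_neg]

theorem transpose_sum_of_transpose_eq_neg {ι n : Type*} {s : Finset ι} {L : ι → Matrix n n ℝ}
    (hL : ∀ j, (L j)ᵀ = -L j) : (∑ j ∈ s, L j)ᵀ = -∑ j ∈ s, L j := by
  simp only [transpose_sum, hL, Finset.sum_neg_distrib]

theorem SO3.mul_transpose {Q : Matrix (Fin 3) (Fin 3) ℝ} (hQ : SO3 Q) : Q * Qᵀ = 1 :=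
  mul_eq_one_comm.mp hQ.1

theorem SO3.transpose {Q : Matrix (Fin 3) (Fin 3) ℝ} (hQ : SO3 Q) : SO3 Qᵀ :=
  ⟨by rw [transpose_transpose, hQ.mul_transpose], by rw [det_transpose, hQ.2]⟩

theorem SO3.mul {P Q : Matrix (Fin 3) (Fin 3) ℝ} (hP : SO3 P) (hQ : SO3 Q) : SO3 (P * Q) :=
  ⟨by rw [transpose_mul, Matrix.mul_assoc, ← Matrix.mul_assoc Pᵀ, hP.1, Matrix.one_mul, hQ.1],
    by rw [det_mul, hP.2, hQ.2, one_mul]⟩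

theorem SO3.adjugate_eq {Q : Matrix (Fin 3) (Fin 3) ℝ} (hQ : SO3 Q) : Q.adjugate = Qᵀ := by
  rw [← inv_eq_left_inv hQ.1, inv_def, hQ.2, Ring.inverse_one, one_smul]

theorem trace_mul_self_fin_three (Q : Matrix (Fin 3) (Fin 3) ℝ) :
    trace (Q * Q) = trace Q ^ 2 - 2 * trace Q.adjugate := by
  simp only [trace_fin_three, mul_apply, adjugate_fin_three, Fin.sum_univ_three, of_apply,
    Matrix.cons_val', Matrix.cons_val_zero, Matrix.cons_val_one, Matrix.cons_val_two,
    Matrix.head_cons, Matrix.tail_cons, Matrix.empty_val', Matrix.cons_val_fin_one,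
    Matrix.head_fin_const]
  ring

theorem SO3.trace_mul_self {Q : Matrix (Fin 3) (Fin 3) ℝ} (hQ : SO3 Q) :
    trace (Q * Q) = trace Q ^ 2 - 2 * trace Q := by
  rw [trace_mul_self_fin_three, hQ.adjugate_eq, trace_transpose]

theorem rotAngle_mem_Ioo_iff (Q : Matrix (Fin 3) (Fin 3) ℝ) :
    rotAngle Q ∈ Set.Ioo 0 π ↔ (trace Q - 1) / 2 ∈ Set.Ioo (-1) 1 :=
  ⟨fun h => ⟨arccos_lt_pi.mp h.2, arccos_pos.mp h.1⟩,
    fun h => ⟨arccos_pos.mpr h.2, arccos_lt_pi.mpr h.1⟩⟩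

theorem cos_rotAngle {Q : Matrix (Fin 3) (Fin 3) ℝ} (hθ : rotAngle Q ∈ Set.Ioo 0 π) :
    cos (rotAngle Q) = (trace Q - 1) / 2 :=
  have hc := (rotAngle_mem_Ioo_iff Q).mp hθ
  cos_arccos hc.1.le hc.2.le

theorem matLog_of_rotAngle_ne_zero {Q : Matrix (Fin 3) (Fin 3) ℝ} (hθ : rotAngle Q ≠ 0) :
    matLog Q = (rotAngle Q / (2 * sin (rotAngle Q))) • (Q - Qᵀ) :=
  if_neg hθ

theorem matLog_transpose (Q : Matrix (Fin 3) (Fin 3) ℝ) : (matLog Q)ᵀ = -matLog Q := by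
  by_cases hθ : rotAngle Q = 0
  · simp [matLog, hθ]
  · rw [matLog_of_rotAngle_ne_zero hθ, transpose_smul, transpose_sub, transpose_transpose,
      ← smul_neg, neg_sub]

-- At `θ = 0` both sides vanish, the right-hand one because `0 / 0 = 0`.
theorem trace_matLog_mul (Q : Matrix (Fin 3) (Fin 3) ℝ) {S : Matrix (Fin 3) (Fin 3) ℝ}
    (hS : Sᵀ = -S) : trace (matLog Q * S) = rotAngle Q / sin (rotAngle Q) * trace (Q * S) := by
  by_cases hθ : rotAngle Q = 0
  · simp [matLog, hθ]
  · rw [matLog_of_rotAngle_ne_zero hθ, Matrix.smul_mul, trace_smul, Matrix.sub_mul, trace_sub,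
      trace_transpose_mul_of_transpose_eq_neg Q hS, smul_eq_mul]
    ring

theorem SO3.norm_vee_matLog_sq {Q : Matrix (Fin 3) (Fin 3) ℝ} (hQ : SO3 Q)
    (hθ : rotAngle Q ∈ Set.Ioo 0 π) : ‖vee (matLog Q)‖ ^ 2 = rotAngle Q ^ 2 := by
  have hsin : sin (rotAngle Q) ≠ 0 := (sin_pos_of_pos_of_lt_pi hθ.1 hθ.2).ne'
  have hQQ : trace (Q * Qᵀ) = 3 := by simp [hQ.mul_transpose]
  rw [norm_vee_sq_of_transpose_eq_neg (matLog_transpose Q),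
    trace_matLog_mul Q (matLog_transpose Q), matLog_of_rotAngle_ne_zero hθ.1.ne', Matrix.mul_smul,
    trace_smul, Matrix.mul_sub, trace_sub, hQ.trace_mul_self, hQQ, smul_eq_mul]
  field_simp
  linear_combination 4 * rotAngle Q ^ 2 * (cos (rotAngle Q) + (trace Q - 1) / 2) * cos_rotAngle hθ
    - 4 * rotAngle Q ^ 2 * sin_sq_add_cos_sq (rotAngle Q)

theorem HasEntrywiseDerivAt.hasDerivAt_half_rotAngle_sq {E : ℝ → Matrix (Fin 3) (Fin 3) ℝ}
    {E' : Matrix (Fin 3) (Fin 3) ℝ} {t : ℝ} (hE : HasEntrywiseDerivAt E E' t)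
    (hθ : rotAngle (E t) ∈ Set.Ioo 0 π) :
    HasDerivAt (fun s => 1 / 2 * rotAngle (E s) ^ 2)
      (-(rotAngle (E t) / (2 * sin (rotAngle (E t)))) * trace E') t := by
  set c := (trace (E t) - 1) / 2 with hc_def
  have hc : c ∈ Set.Ioo (-1) 1 := (rotAngle_mem_Ioo_iff (E t)).mp hθ
  have hsin : 0 < √(1 - c ^ 2) := sin_arccos c ▸ sin_pos_of_pos_of_lt_pi hθ.1 hθ.2
  have hc' : HasDerivAt (fun s => (trace (E s) - 1) / 2) (trace E' / 2) t :=
    (hE.hasDerivAt_trace.sub_const 1).div_const 2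
  have hθ' := (hasDerivAt_arccos hc.1.ne' hc.2.ne).comp t hc'
  refine ((hθ'.pow 2).const_mul (1 / 2 : ℝ)).congr_deriv ?_
  simp only [Function.comp_apply, ← hc_def, show rotAngle (E t) = arccos c from rfl, sin_arccos]
  field_simp
  ring

theorem trace_relative_rotation_deriv (P Q C : Matrix (Fin 3) (Fin 3) ℝ)
    {A B : Matrix (Fin 3) (Fin 3) ℝ}
    (hA : Aᵀ = -A) (hB : Bᵀ = -B) :
    trace (((P * A)ᵀ * Q + Pᵀ * (Q * B)) * Cᵀ)
      = -trace (Pᵀ * Q * Cᵀ * A) - trace (Qᵀ * P * C * B) := by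
  have hPA : trace ((P * A)ᵀ * Q * Cᵀ) = -trace (Pᵀ * Q * Cᵀ * A) := by
    rw [transpose_mul, hA, trace_mul_comm (Pᵀ * Q * Cᵀ) A]
    simp [Matrix.mul_assoc]
  have hQB : trace (Pᵀ * (Q * B) * Cᵀ) = -trace (Qᵀ * P * C * B) := by
    rw [trace_mul_comm (Pᵀ * (Q * B)) Cᵀ, ← trace_transpose]
    simp only [transpose_mul, transpose_transpose, hB, Matrix.neg_mul, trace_neg, Matrix.mul_assoc]
    rw [trace_mul_comm]
    simp only [Matrix.mul_assoc]
  rw [Matrix.add_mul, trace_add, hPA, hQB]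
  ring

theorem hasDerivAt_half_norm_vee_matLog_relative_sq {P Q : ℝ → Matrix (Fin 3) (Fin 3) ℝ}
    {A B : Matrix (Fin 3) (Fin 3) ℝ} (C : Matrix (Fin 3) (Fin 3) ℝ) {t : ℝ}
    (hP : HasEntrywiseDerivAt P (P t * A) t) (hQ : HasEntrywiseDerivAt Q (Q t * B) t)
    (hA : Aᵀ = -A) (hB : Bᵀ = -B) (hSO : ∀ s, SO3 ((P s)ᵀ * Q s * Cᵀ))
    (hθ : ∀ s, rotAngle ((P s)ᵀ * Q s * Cᵀ) ∈ Set.Ioo 0 π) :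
    HasDerivAt (fun s => 1 / 2 * ‖vee (matLog ((P s)ᵀ * Q s * Cᵀ))‖ ^ 2)
      ((trace (matLog ((P t)ᵀ * Q t * Cᵀ) * A) + trace (matLog ((Q t)ᵀ * P t * C) * B)) / 2) t := by
  simp only [fun s => (hSO s).norm_vee_matLog_sq (hθ s)]
  have hangle : rotAngle ((Q t)ᵀ * P t * C) = rotAngle ((P t)ᵀ * Q t * Cᵀ) := by
    rw [rotAngle, rotAngle, ← trace_transpose, transpose_mul, transpose_mul, transpose_transpose,
      trace_mul_cycle, Matrix.mul_assoc]
  refine (((hP.transpose.mul hQ).mul_const Cᵀ).hasDerivAt_half_rotAngle_sq (hθ t)).congr_deriv ?_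
  rw [trace_relative_rotation_deriv _ _ _ hA hB, trace_matLog_mul _ hA, trace_matLog_mul _ hB,
    hangle]
  ring

section Graph

variable {V : Type*} [Fintype V] {Adj : V → V → Prop} [DecidableRel Adj]

theorem sum_sum_filter_comm_of_symm {β : Type*} [AddCommMonoid β]
    (hsym : ∀ i j, Adj i j → Adj j i) (g : V → V → β) :
    ∑ i, ∑ j ∈ Finset.univ.filter (fun j => Adj i j), g i j
      = ∑ i, ∑ j ∈ Finset.univ.filter (fun j => Adj i j), g j i :=
  Finset.sum_comm' fun i j => by simpa using ⟨hsym i j, hsym j i⟩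

theorem sum_sum_trace_mul_sum_eq_neg_two_mul_sum_norm_vee_sq (L : V → V → Matrix (Fin 3) (Fin 3) ℝ)
    (hL : ∀ i j, (L i j)ᵀ = -L i j) :
    ∑ i, ∑ j ∈ Finset.univ.filter (fun j => Adj i j),
        trace (L i j * ∑ k ∈ Finset.univ.filter (fun k => Adj i k), L i k)
      = -2 * ∑ i, ‖∑ j ∈ Finset.univ.filter (fun j => Adj i j), vee (L i j)‖ ^ 2 := by
  rw [Finset.mul_sum]
  refine Finset.sum_congr rfl fun i _ => ?_
  rw [← vee_sum, norm_vee_sq_of_transpose_eq_neg (transpose_sum_of_transpose_eq_neg (hL i)),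
    ← trace_sum, ← Finset.sum_mul]
  ring

end Graph

/-- (Lyapunov derivative identity for GeoD rotation estimation.) Under pairwise
consistent measurements and the GeoD rotation dynamics, the Lyapunov function
`V(t) = Σ_i Σ_{j∼i} (1/2)‖(Log(Rᵢ(t)ᵀ Rⱼ(t) R̃(i,j)ᵀ))^∨‖²` is differentiable at every
`t` with derivative `−2 Σ_i ‖ω_i(t)‖²`, where
`ω_i(t) = Σ_{j∼i} (Log(Rᵢ(t)ᵀ Rⱼ(t) R̃(i,j)ᵀ))^∨`. -/
theorem geoD_lyapunov_derivative {V : Type*} [Fintype V]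
    (Adj : V → V → Prop) [DecidableRel Adj] (hsym : ∀ i j, Adj i j → Adj j i)
    (Rtil : V → V → Matrix (Fin 3) (Fin 3) ℝ)
    (hRtilSO : ∀ i j, Adj i j → SO3 (Rtil i j))
    (hpair : ∀ i j, Adj i j → Rtil j i = (Rtil i j)ᵀ)
    (R : V → ℝ → Matrix (Fin 3) (Fin 3) ℝ)
    (hSO : ∀ i t, SO3 (R i t))
    (hθ : ∀ i j, Adj i j → ∀ t,
      rotAngle ((R i t)ᵀ * R j t * (Rtil i j)ᵀ) ∈ Set.Ioo 0 (π / 2))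
    (hdyn : ∀ i t, ∀ p q, HasDerivAt (fun s => R i s p q)
      ((R i t * ∑ j ∈ Finset.univ.filter (fun j => Adj i j),
          matLog ((R i t)ᵀ * R j t * (Rtil i j)ᵀ)) p q) t) :
    ∀ t, HasDerivAt
      (fun s => ∑ i, ∑ j ∈ Finset.univ.filter (fun j => Adj i j),
        (1 / 2 : ℝ) * ‖vee (matLog ((R i s)ᵀ * R j s * (Rtil i j)ᵀ))‖ ^ 2)
      (-2 * ∑ i, ‖∑ j ∈ Finset.univ.filter (fun j => Adj i j),
        vee (matLog ((R i t)ᵀ * R j t * (Rtil i j)ᵀ))‖ ^ 2) t := by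
  intro t
  have hθπ i j (hij : Adj i j) s : rotAngle ((R i s)ᵀ * R j s * (Rtil i j)ᵀ) ∈ Set.Ioo 0 π :=
    Set.Ioo_subset_Ioo_right (half_le_self pi_pos.le) (hθ i j hij s)
  have hskew i := transpose_sum_of_transpose_eq_neg (s := Finset.univ.filter (fun j => Adj i j))
    fun j => matLog_transpose ((R i t)ᵀ * R j t * (Rtil i j)ᵀ)
  refine (HasDerivAt.fun_sum fun i _ => HasDerivAt.fun_sum fun j hj =>
    have hij := (Finset.mem_filter.mp hj).2
    hasDerivAt_half_norm_vee_matLog_relative_sq (Rtil i j) (hdyn i t) (hdyn j t) (hskew i) (hskew j)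
      (fun s => ((hSO i s).transpose.mul (hSO j s)).mul (hRtilSO i j hij).transpose)
      (hθπ i j hij)).congr_deriv ?_
  rw [← sum_sum_trace_mul_sum_eq_neg_two_mul_sum_norm_vee_sq _
    fun i j => matLog_transpose ((R i t)ᵀ * R j t * (Rtil i j)ᵀ)]
  simp only [add_div, Finset.sum_add_distrib]
  rw [sum_sum_filter_comm_of_symm hsym
    (fun i j => trace (matLog ((R j t)ᵀ * R i t * Rtil i j) * _) / 2), ← Finset.sum_add_distrib]
  refine Finset.sum_congr rfl fun i _ => ?_
  rw [← Finset.sum_add_distrib]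
  refine Finset.sum_congr rfl fun j hj => ?_
  rw [hpair i j (Finset.mem_filter.mp hj).2]
  ring
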